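/- arXiv:2502.05021 — 7 statements merged into one kernel-verified Lean document; each statement's English description precedes it below -/
import Mathlib

section
/- Let P ∈ ℝ^{k×k} be symmetric positive definite and let H ∈ ℝ^{k×k} be symmetric with α·I ⪯ −H for some α ∈ ℝ satisfying λ_min(P) > α⁻. Then I − P⁻¹H is invertible and its P-weighted matrix norm satisfies ‖(I − P⁻¹H)⁻¹‖_P ≤ 1 − α⁺/(λ_max(P) + α⁺) + α⁻/(λ_min(P) − α⁻). (This is the bound on the Jacobian dθ_{t|t}/dθ_{t|t−1} = (I − P⁻¹H)⁻¹ of the implicit score-driven update, Lemma 1, inequality (8).) -/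
open Matrix

/-- Smallest eigenvalue of a (Hermitian) real matrix; junk value 0 otherwise. -/
noncomputable def lMin {k : ℕ} (A : Matrix (Fin k) (Fin k) ℝ) : ℝ :=
  letI := Classical.propDecidable A.IsHermitian
  if h : A.IsHermitian then ⨅ i, h.eigenvalues i else 0

/-- Largest eigenvalue of a (Hermitian) real matrix; junk value 0 otherwise. -/
noncomputable def lMax {k : ℕ} (A : Matrix (Fin k) (Fin k) ℝ) : ℝ :=
  letI := Classical.propDecidable A.IsHermitian
  if h : A.IsHermitian then ⨆ i, h.eigenvalues i else 0

/-- P-weighted squared vector norm `‖x‖_P² = xᵀ P x`. -/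
def wq {k : ℕ} (P : Matrix (Fin k) (Fin k) ℝ) (x : Fin k → ℝ) : ℝ := x ⬝ᵥ P *ᵥ x

/-- Induced P-weighted matrix norm `‖A‖_P = sup_{x ≠ 0} ‖Ax‖_P / ‖x‖_P`. -/
noncomputable def wMatNorm {k : ℕ} (P A : Matrix (Fin k) (Fin k) ℝ) : ℝ :=
  sSup {r : ℝ | ∃ x : Fin k → ℝ, x ≠ 0 ∧ r = Real.sqrt (wq P (A *ᵥ x)) / Real.sqrt (wq P x)}

/-! With `M = 1 - P⁻¹H` one has `yᵀP(My) = yᵀ(P - H)y ≥ c · yᵀPy`, where `c = 1 + α/λ_max(P)` if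
`α ≥ 0` and `c = 1 + α/λ_min(P)` if `α < 0`: combine `-H ⪰ αI` with the Rayleigh bounds
`λ_min(P)‖y‖² ≤ yᵀPy ≤ λ_max(P)‖y‖²`. The claimed bound is exactly `c⁻¹`. Coercivity of `M` in
the `P`-inner product makes `M` injective, and Cauchy–Schwarz turns
`c‖y‖_P² ≤ ⟨y, My⟩_P ≤ ‖y‖_P ‖My‖_P` into `‖M⁻¹‖_P ≤ c⁻¹`. -/

namespace Matrix

variable {n : Type*} [Fintype n]

lemma IsHermitian.dotProduct_mulVec_comm {P : Matrix n n ℝ} (hP : P.IsHermitian) (x y : n → ℝ) :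
    x ⬝ᵥ P *ᵥ y = y ⬝ᵥ P *ᵥ x := by
  rw [dotProduct_mulVec, ← mulVec_transpose,
    ← hP.eq.symm.trans (conjTranspose_eq_transpose_of_trivial P), dotProduct_comm]

lemma PosSemidef.dotProduct_mulVec_sq_le {P : Matrix n n ℝ} (hP : P.PosSemidef) (x y : n → ℝ) :
    (x ⬝ᵥ P *ᵥ y) ^ 2 ≤ (x ⬝ᵥ P *ᵥ x) * (y ⬝ᵥ P *ᵥ y) := by
  have hsymm := hP.isHermitian.dotProduct_mulVec_comm x y
  have hquad : ∀ t : ℝ,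
      0 ≤ (y ⬝ᵥ P *ᵥ y) * (t * t) + (2 * (x ⬝ᵥ P *ᵥ y)) * t + (x ⬝ᵥ P *ᵥ x) := by
    intro t
    have h := hP.dotProduct_mulVec_nonneg (t • y + x)
    simp only [star_trivial, mulVec_add, mulVec_smul, dotProduct_add, add_dotProduct,
      dotProduct_smul, smul_dotProduct, smul_eq_mul] at h
    rw [← hsymm] at h
    linarith
  have hd := discrim_le_zero hquad
  rw [discrim] at hd
  linarith

lemma IsHermitian.exists_dotProduct_mulVec_eq_sum {A : Matrix n n ℝ} [DecidableEq n]
    (hA : A.IsHermitian) (y : n → ℝ) :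
    ∃ z : n → ℝ, y ⬝ᵥ A *ᵥ y = ∑ i, hA.eigenvalues i * z i ^ 2 ∧ y ⬝ᵥ y = ∑ i, z i ^ 2 := by
  set U : Matrix n n ℝ := (hA.eigenvectorUnitary : Matrix n n ℝ)
  have hUt : star U = Uᵀ := by
    rw [star_eq_conjTranspose, conjTranspose_eq_transpose_of_trivial]
  have hUU : U * Uᵀ = 1 := hUt ▸ (mem_unitaryGroup_iff).mp hA.eigenvectorUnitary.2
  refine ⟨Uᵀ *ᵥ y, ?_, ?_⟩
  · conv_lhs => rw [hA.spectral_theorem, Unitary.conjStarAlgAut_apply]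
    rw [hUt, ← mulVec_mulVec, ← mulVec_mulVec, dotProduct_mulVec, ← mulVec_transpose]
    simp only [dotProduct, mulVec_diagonal, Function.comp_apply, RCLike.ofReal_real_eq_id, id]
    exact Finset.sum_congr rfl fun i _ => by ring
  · have hz : (Uᵀ *ᵥ y) ⬝ᵥ (Uᵀ *ᵥ y) = y ⬝ᵥ y := by
      rw [dotProduct_mulVec, vecMul_transpose, mulVec_mulVec, hUU, one_mulVec]
    rw [← hz]
    simp only [dotProduct, sq]

lemma IsHermitian.iInf_eigenvalues_mul_dotProduct_le [DecidableEq n] {A : Matrix n n ℝ}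
    (hA : A.IsHermitian) (y : n → ℝ) : (⨅ i, hA.eigenvalues i) * (y ⬝ᵥ y) ≤ y ⬝ᵥ A *ᵥ y := by
  obtain ⟨z, hAy, hy⟩ := hA.exists_dotProduct_mulVec_eq_sum y
  rw [hAy, hy, Finset.mul_sum]
  exact Finset.sum_le_sum fun i _ =>
    mul_le_mul_of_nonneg_right (ciInf_le (Set.finite_range _).bddBelow i) (sq_nonneg _)

lemma IsHermitian.dotProduct_mulVec_le_iSup_eigenvalues_mul [DecidableEq n] {A : Matrix n n ℝ}
    (hA : A.IsHermitian) (y : n → ℝ) : y ⬝ᵥ A *ᵥ y ≤ (⨆ i, hA.eigenvalues i) * (y ⬝ᵥ y) := by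
  obtain ⟨z, hAy, hy⟩ := hA.exists_dotProduct_mulVec_eq_sum y
  rw [hAy, hy, Finset.mul_sum]
  exact Finset.sum_le_sum fun i _ =>
    mul_le_mul_of_nonneg_right (le_ciSup (Set.finite_range _).bddAbove i) (sq_nonneg _)

lemma mul_dotProduct_self_le_neg_dotProduct_mulVec [DecidableEq n] {H : Matrix n n ℝ} {α : ℝ}
    (hH : (-H - α • (1 : Matrix n n ℝ)).PosSemidef) (y : n → ℝ) :
    α * (y ⬝ᵥ y) ≤ -(y ⬝ᵥ H *ᵥ y) := by
  have h := hH.dotProduct_mulVec_nonneg y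
  simp only [star_trivial, sub_mulVec, neg_mulVec, smul_mulVec, one_mulVec, dotProduct_sub,
    dotProduct_neg, dotProduct_smul, smul_eq_mul] at h
  linarith

end Matrix

section Weighted

variable {k : ℕ} {P M H : Matrix (Fin k) (Fin k) ℝ}

lemma lMin_mul_dotProduct_le_wq (hP : P.IsHermitian) (y : Fin k → ℝ) :
    lMin P * (y ⬝ᵥ y) ≤ wq P y := by
  rw [lMin, dif_pos hP]
  exact hP.iInf_eigenvalues_mul_dotProduct_le y

lemma wq_le_lMax_mul_dotProduct (hP : P.IsHermitian) (y : Fin k → ℝ) :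
    wq P y ≤ lMax P * (y ⬝ᵥ y) := by
  rw [lMax, dif_pos hP]
  exact hP.dotProduct_mulVec_le_iSup_eigenvalues_mul y

lemma nonempty_of_lMin_pos (h : 0 < lMin P) : Nonempty (Fin k) := by
  by_contra hk
  rw [not_nonempty_iff] at hk
  unfold lMin at h
  split_ifs at h <;> simp [Real.iInf_of_isEmpty] at h

lemma lMin_le_lMax [Nonempty (Fin k)] (hP : P.IsHermitian) : lMin P ≤ lMax P := by
  rw [lMin, lMax, dif_pos hP, dif_pos hP]
  exact ciInf_le_ciSup (Set.finite_range _).bddBelow (Set.finite_range _).bddAbove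

lemma wq_nonneg (hP : P.PosSemidef) (x : Fin k → ℝ) : 0 ≤ wq P x := by
  simpa only [star_trivial, wq] using hP.dotProduct_mulVec_nonneg x

lemma wq_pos (hP : P.PosDef) {x : Fin k → ℝ} (hx : x ≠ 0) : 0 < wq P x := by
  simpa only [star_trivial, wq] using hP.dotProduct_mulVec_pos hx

lemma sq_mul_wq_le_of_coercive (hP : P.PosSemidef) {c : ℝ} (hc : 0 ≤ c)
    (hM : ∀ y, c * wq P y ≤ y ⬝ᵥ P *ᵥ (M *ᵥ y)) (y : Fin k → ℝ) :
    c ^ 2 * wq P y ≤ wq P (M *ᵥ y) := by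
  have hy := wq_nonneg hP y
  have hcs : (y ⬝ᵥ P *ᵥ (M *ᵥ y)) ^ 2 ≤ wq P y * wq P (M *ᵥ y) :=
    hP.dotProduct_mulVec_sq_le y (M *ᵥ y)
  have hsq : (c * wq P y) ^ 2 ≤ (y ⬝ᵥ P *ᵥ (M *ᵥ y)) ^ 2 :=
    pow_le_pow_left₀ (mul_nonneg hc hy) (hM y) 2
  rcases hy.eq_or_lt with h0 | hpos
  · rw [← h0, mul_zero]
    exact wq_nonneg hP _
  · refine le_of_mul_le_mul_right ?_ hpos
    calc c ^ 2 * wq P y * wq P y = (c * wq P y) ^ 2 := by ring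
      _ ≤ wq P y * wq P (M *ᵥ y) := hsq.trans hcs
      _ = wq P (M *ᵥ y) * wq P y := mul_comm _ _

lemma isUnit_of_coercive (hP : P.PosDef) {c : ℝ} (hc : 0 < c)
    (hM : ∀ y, c * wq P y ≤ y ⬝ᵥ P *ᵥ (M *ᵥ y)) : IsUnit M := by
  rw [isUnit_iff_isUnit_det, isUnit_iff_ne_zero]
  intro hdet
  obtain ⟨v, hv, hMv⟩ := exists_mulVec_eq_zero_iff.2 hdet
  have hv' := hM v
  rw [hMv, mulVec_zero, dotProduct_zero] at hv'
  exact (mul_pos hc (wq_pos hP hv)).not_ge hv'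

lemma wMatNorm_le_of_wq_le {C : ℝ} (hC : 0 ≤ C) (h : ∀ x, wq P (M *ᵥ x) ≤ C ^ 2 * wq P x) :
    wMatNorm P M ≤ C := by
  refine Real.sSup_le ?_ hC
  rintro r ⟨x, -, rfl⟩
  refine div_le_of_le_mul₀ (Real.sqrt_nonneg _) hC ?_
  calc √(wq P (M *ᵥ x)) ≤ √(C ^ 2 * wq P x) := Real.sqrt_le_sqrt (h x)
    _ = C * √(wq P x) := by rw [Real.sqrt_mul (sq_nonneg C), Real.sqrt_sq hC]

theorem isUnit_and_wMatNorm_inv_le_of_coercive (hP : P.PosDef) {c : ℝ} (hc : 0 < c)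
    (hM : ∀ y, c * wq P y ≤ y ⬝ᵥ P *ᵥ (M *ᵥ y)) : IsUnit M ∧ wMatNorm P M⁻¹ ≤ c⁻¹ := by
  have hU := isUnit_of_coercive hP hc hM
  refine ⟨hU, wMatNorm_le_of_wq_le (inv_nonneg.2 hc.le) fun x => ?_⟩
  have h := sq_mul_wq_le_of_coercive hP.posSemidef hc.le hM (M⁻¹ *ᵥ x)
  rw [mulVec_mulVec, mul_nonsing_inv _ ((isUnit_iff_isUnit_det M).1 hU), one_mulVec] at h
  rw [inv_pow, ← div_eq_inv_mul, le_div_iff₀ (by positivity), mul_comm]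
  exact h

lemma dotProduct_mulVec_one_sub_inv_mul_mulVec (hP : IsUnit P.det) (y : Fin k → ℝ) :
    y ⬝ᵥ P *ᵥ ((1 - P⁻¹ * H) *ᵥ y) = wq P y - y ⬝ᵥ H *ᵥ y := by
  rw [mulVec_mulVec, mul_sub, mul_one, ← mul_assoc, mul_nonsing_inv _ hP, one_mul, sub_mulVec,
    dotProduct_sub]
  rfl

lemma one_add_div_lMax_mul_wq_le (hP : P.PosDef) (hmax : 0 < lMax P) {α : ℝ} (hα : 0 ≤ α)
    (hcurv : (-H - α • (1 : Matrix (Fin k) (Fin k) ℝ)).PosSemidef) (y : Fin k → ℝ) :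
    (1 + α / lMax P) * wq P y ≤ y ⬝ᵥ P *ᵥ ((1 - P⁻¹ * H) *ᵥ y) := by
  rw [dotProduct_mulVec_one_sub_inv_mul_mulVec ((isUnit_iff_isUnit_det P).1 hP.isUnit) y]
  have hscaled : α / lMax P * wq P y ≤ α * (y ⬝ᵥ y) :=
    calc α / lMax P * wq P y ≤ α / lMax P * (lMax P * (y ⬝ᵥ y)) :=
          mul_le_mul_of_nonneg_left (wq_le_lMax_mul_dotProduct hP.isHermitian y)
            (div_nonneg hα hmax.le)
      _ = α * (y ⬝ᵥ y) := by field_simp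
  linarith [mul_dotProduct_self_le_neg_dotProduct_mulVec hcurv y]

lemma one_add_div_lMin_mul_wq_le (hP : P.PosDef) (hmin : 0 < lMin P) {α : ℝ} (hα : α ≤ 0)
    (hcurv : (-H - α • (1 : Matrix (Fin k) (Fin k) ℝ)).PosSemidef) (y : Fin k → ℝ) :
    (1 + α / lMin P) * wq P y ≤ y ⬝ᵥ P *ᵥ ((1 - P⁻¹ * H) *ᵥ y) := by
  rw [dotProduct_mulVec_one_sub_inv_mul_mulVec ((isUnit_iff_isUnit_det P).1 hP.isUnit) y]
  have hscaled : α / lMin P * wq P y ≤ α * (y ⬝ᵥ y) :=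
    calc α / lMin P * wq P y ≤ α / lMin P * (lMin P * (y ⬝ᵥ y)) :=
          mul_le_mul_of_nonpos_left (lMin_mul_dotProduct_le_wq hP.isHermitian y)
            (div_nonpos_of_nonpos_of_nonneg hα hmin.le)
      _ = α * (y ⬝ᵥ y) := by field_simp
  linarith [mul_dotProduct_self_le_neg_dotProduct_mulVec hcurv y]

end Weighted

theorem isd_update_stability_general {k : ℕ} (P H : Matrix (Fin k) (Fin k) ℝ)
    (hP : P.PosDef) (α : ℝ)
    (hcurv : (-H - α • (1 : Matrix (Fin k) (Fin k) ℝ)).PosSemidef)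
    (hpen : max (-α) 0 < lMin P) :
    IsUnit (1 - P⁻¹ * H) ∧
      wMatNorm P ((1 - P⁻¹ * H)⁻¹) ≤
        1 - max α 0 / (lMax P + max α 0) + max (-α) 0 / (lMin P - max (-α) 0) := by
  have hmin : 0 < lMin P := (le_max_right _ _).trans_lt hpen
  have : Nonempty (Fin k) := nonempty_of_lMin_pos hmin
  obtain ⟨c, hc, hcoer, hbound⟩ : ∃ c : ℝ, 0 < c ∧
      (∀ y, c * wq P y ≤ y ⬝ᵥ P *ᵥ ((1 - P⁻¹ * H) *ᵥ y)) ∧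
      1 - max α 0 / (lMax P + max α 0) + max (-α) 0 / (lMin P - max (-α) 0) = c⁻¹ := by
    rcases le_or_gt 0 α with hα | hα
    · have hmax : 0 < lMax P := hmin.trans_le (lMin_le_lMax hP.isHermitian)
      refine ⟨1 + α / lMax P, by positivity, one_add_div_lMax_mul_wq_le hP hmax hα hcurv, ?_⟩
      rw [max_eq_left hα, max_eq_right (neg_nonpos.2 hα)]
      field_simp
      ring
    · have hmα : 0 < lMin P + α := by linarith [le_max_left (-α) 0]
      refine ⟨1 + α / lMin P, ?_, one_add_div_lMin_mul_wq_le hP hmin hα.le hcurv, ?_⟩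
      · rw [one_add_div hmin.ne']
        exact div_pos hmα hmin
      · rw [max_eq_right hα.le, max_eq_left (neg_nonneg.2 hα.le), sub_neg_eq_add]
        field_simp
        ring
  rw [hbound]
  exact isUnit_and_wMatNorm_inv_le_of_coercive hP hc hcoer

/-- Lemma 1, inequality (8): stability of the implicit score-driven update.
If `P ≻ 0` is symmetric, `H` is symmetric with `α·I ⪯ −H` and `λ_min(P) > α⁻`, then
`I − P⁻¹H` is invertible and `‖(I − P⁻¹H)⁻¹‖_P ≤ 1 − α⁺/(λ_max(P)+α⁺) + α⁻/(λ_min(P)−α⁻)`. -/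
theorem isd_update_stability {k : ℕ} (P H : Matrix (Fin k) (Fin k) ℝ)
    (hP : P.PosDef) (hH : H.IsHermitian) (α : ℝ)
    (hcurv : (-H - α • (1 : Matrix (Fin k) (Fin k) ℝ)).PosSemidef)
    (hpen : max (-α) 0 < lMin P) :
    IsUnit (1 - P⁻¹ * H) ∧
      wMatNorm P ((1 - P⁻¹ * H)⁻¹) ≤
        1 - max α 0 / (lMax P + max α 0) + max (-α) 0 / (lMin P - max (-α) 0) :=
  isd_update_stability_general P H hP α hcurv hpen
end

section
/- Let P ∈ ℝ^{k×k} be symmetric positive definite and let H ∈ ℝ^{k×k} be symmetric with α·I ⪯ −H ⪯ β·I, where α ≤ β, 0 < β < ∞, and λ_min(P) > α⁻. Then the P-weighted matrix norm of I + P⁻¹H satisfies ‖I + P⁻¹H‖_P ≤ 1 − min{ α⁺/λ_max(P) − α⁻/λ_min(P) , 2 − β/λ_min(P) }. (This is the bound on the Jacobian dθ_{t|t}/dθ_{t|t−1} = I + P⁻¹H of the explicit score-driven update, Lemma 1, inequality (9).) -/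
/-!
Put `a := α⁺/λ_max(P) − α⁻/λ_min(P)` and `b := β/λ_min(P)`. Comparing `I` with `P` through
`λ_min(P)·I ⪯ P ⪯ λ_max(P)·I` turns `α·I ⪯ −H ⪯ β·I` into `a·P ⪯ −H ⪯ b·P`, hence
`−c·P ⪯ P + H ⪯ c·P` for `c := max(1 − a, b − 1) = 1 − min(a, 2 − b)`. The two-sided bound
gives the Cauchy–Schwarz inequality `⟨u, (P + H) w⟩ ≤ c ‖u‖_P ‖w‖_P`, and for
`z := (I + P⁻¹H) x` we have `P z = (P + H) x`, so `‖z‖_P² = ⟨z, (P + H) x⟩ ≤ c ‖z‖_P ‖x‖_P`.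
-/

open Matrix

open MatrixOrder

section OrderedModule

variable {E : Type*} [AddCommMonoid E] [Preorder E] [Module ℝ E] [PosSMulMono ℝ E]
  {x y : E} {r m : ℝ}

lemma div_smul_le_smul_of_le_smul (hr : 0 ≤ r) (hm : 0 < m) (h : x ≤ m • y) :
    (r / m) • x ≤ r • y :=
  calc (r / m) • x ≤ (r / m) • (m • y) := smul_le_smul_of_nonneg_left h (div_nonneg hr hm.le)
    _ = r • y := by rw [smul_smul, div_mul_cancel₀ r hm.ne']

lemma smul_le_div_smul_of_smul_le (hr : 0 ≤ r) (hm : 0 < m) (h : m • y ≤ x) :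
    r • y ≤ (r / m) • x :=
  calc r • y = (r / m) • (m • y) := by rw [smul_smul, div_mul_cancel₀ r hm.ne']
    _ ≤ (r / m) • x := smul_le_smul_of_nonneg_left h (div_nonneg hr hm.le)

end OrderedModule

section QuadraticForms

variable {n : Type*} [Fintype n] {P B : Matrix n n ℝ} {a b c : ℝ}

lemma Matrix.IsHermitian.dotProduct_mulVec_comm_s1 {A : Matrix n n ℝ} (hA : A.IsHermitian)
    (x y : n → ℝ) : x ⬝ᵥ A *ᵥ y = y ⬝ᵥ A *ᵥ x := by
  rw [dotProduct_mulVec, ← mulVec_transpose, dotProduct_comm,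
    ← conjTranspose_eq_transpose_of_trivial, hA.eq]

lemma Matrix.PosDef.le_of_smul_le_smul [Nonempty n] (hP : P.PosDef) (h : a • P ≤ b • P) :
    a ≤ b := by
  obtain ⟨x, hx⟩ := exists_ne (0 : n → ℝ)
  have hPx : 0 < x ⬝ᵥ P *ᵥ x := by simpa using hP.dotProduct_mulVec_pos hx
  have hab := (Matrix.le_iff.1 h).dotProduct_mulVec_nonneg x
  simp only [star_trivial, sub_mulVec, smul_mulVec, dotProduct_sub, dotProduct_smul,
    smul_eq_mul, ← sub_mul] at hab
  exact sub_nonneg.1 (nonneg_of_mul_nonneg_left hab hPx)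

lemma sq_dotProduct_mulVec_le (hB : B.IsHermitian) (hle : B ≤ c • P) (hge : -(c • P) ≤ B)
    (u w : n → ℝ) : (u ⬝ᵥ B *ᵥ w) ^ 2 ≤ c ^ 2 * (u ⬝ᵥ P *ᵥ u) * (w ⬝ᵥ P *ᵥ w) := by
  -- the sum of the forms of `c P - B` at `t u + w` and of `c P + B` at `t u - w` is this quadratic
  have hquad : ∀ t : ℝ, 0 ≤ (c * (u ⬝ᵥ P *ᵥ u)) * (t * t) + (-2 * (u ⬝ᵥ B *ᵥ w)) * t
      + c * (w ⬝ᵥ P *ᵥ w) := by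
    intro t
    have h₁ := (Matrix.le_iff.1 hle).dotProduct_mulVec_nonneg (t • u + w)
    have h₂ := (Matrix.le_iff.1 hge).dotProduct_mulVec_nonneg (t • u - w)
    simp only [star_trivial, sub_neg_eq_add, sub_mulVec, add_mulVec, smul_mulVec, mulVec_add,
      mulVec_sub, mulVec_smul, dotProduct_add, dotProduct_sub, add_dotProduct, sub_dotProduct,
      dotProduct_smul, smul_dotProduct, smul_eq_mul] at h₁ h₂
    rw [hB.dotProduct_mulVec_comm_s1 w u] at h₁ h₂
    linarith
  have := discrim_le_zero hquad
  rw [discrim] at this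
  nlinarith

lemma dotProduct_mulVec_inv_mul_le [DecidableEq n] (hP : P.PosDef) (hB : B.IsHermitian)
    (hle : B ≤ c • P) (hge : -(c • P) ≤ B) (x : n → ℝ) :
    ((P⁻¹ * B) *ᵥ x) ⬝ᵥ P *ᵥ ((P⁻¹ * B) *ᵥ x) ≤ c ^ 2 * (x ⬝ᵥ P *ᵥ x) := by
  set z := (P⁻¹ * B) *ᵥ x
  have hPz : P *ᵥ z = B *ᵥ x := by
    rw [mulVec_mulVec, ← mul_assoc, mul_nonsing_inv P hP.det_pos.ne'.isUnit, one_mul]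
  have hz : 0 ≤ z ⬝ᵥ P *ᵥ z := by simpa using hP.posSemidef.dotProduct_mulVec_nonneg z
  have hx : 0 ≤ x ⬝ᵥ P *ᵥ x := by simpa using hP.posSemidef.dotProduct_mulVec_nonneg x
  have hCS := sq_dotProduct_mulVec_le hB hle hge z x
  rw [← hPz] at hCS
  rcases hz.eq_or_lt with hz0 | hzpos
  · rw [← hz0]
    positivity
  · exact le_of_mul_le_mul_left (by linarith) hzpos

end QuadraticForms

lemma wMatNorm_le_of_wq_le_s1 {k : ℕ} {P A : Matrix (Fin k) (Fin k) ℝ} {c : ℝ} (hc : 0 ≤ c)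
    (h : ∀ x, wq P (A *ᵥ x) ≤ c ^ 2 * wq P x) : wMatNorm P A ≤ c := by
  refine Real.sSup_le ?_ hc
  rintro r ⟨x, -, rfl⟩
  refine div_le_of_le_mul₀ (Real.sqrt_nonneg _) hc ?_
  calc √(wq P (A *ᵥ x)) ≤ √(c ^ 2 * wq P x) := Real.sqrt_le_sqrt (h x)
    _ = c * √(wq P x) := by rw [Real.sqrt_mul (sq_nonneg c), Real.sqrt_sq hc]

section Spectrum

variable {k : ℕ} {A : Matrix (Fin k) (Fin k) ℝ}

lemma nonempty_of_lMin_ne_zero (h : lMin A ≠ 0) : Nonempty (Fin k) := by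
  by_contra hk
  rw [not_nonempty_iff] at hk
  exact h (by unfold lMin; split_ifs <;> simp [Real.iInf_of_isEmpty])

lemma lMin_smul_one_le (hA : A.IsHermitian) : lMin A • (1 : Matrix (Fin k) (Fin k) ℝ) ≤ A := by
  rw [← Algebra.algebraMap_eq_smul_one, algebraMap_le_iff_le_spectrum,
    hA.spectrum_real_eq_range_eigenvalues]
  rintro _ ⟨i, rfl⟩
  rw [lMin, dif_pos hA]
  exact ciInf_le (Set.finite_range _).bddBelow i

lemma le_lMax_smul_one (hA : A.IsHermitian) : A ≤ lMax A • (1 : Matrix (Fin k) (Fin k) ℝ) := by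
  rw [← Algebra.algebraMap_eq_smul_one, le_algebraMap_iff_spectrum_le,
    hA.spectrum_real_eq_range_eigenvalues]
  rintro _ ⟨i, rfl⟩
  rw [lMax, dif_pos hA]
  exact le_ciSup (Set.finite_range _).bddAbove i

end Spectrum

lemma wMatNorm_one_add_inv_mul_le {k : ℕ} [Nonempty (Fin k)] {P H : Matrix (Fin k) (Fin k) ℝ}
    {a b : ℝ} (hP : P.PosDef) (hH : H.IsHermitian) (ha : a • P ≤ -H) (hb : -H ≤ b • P) :
    wMatNorm P (1 + P⁻¹ * H) ≤ max (1 - a) (b - 1) := by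
  set c := max (1 - a) (b - 1)
  have hab : a ≤ b := hP.le_of_smul_le_smul (ha.trans hb)
  have hc : 0 ≤ c := by linarith [le_max_left (1 - a) (b - 1), le_max_right (1 - a) (b - 1)]
  have hP0 : 0 ≤ P := Matrix.nonneg_iff_posSemidef.2 hP.posSemidef
  have hle : P + H ≤ c • P :=
    calc P + H = P - -H := (sub_neg_eq_add P H).symm
      _ ≤ P - a • P := sub_le_sub_left ha P
      _ = (1 - a) • P := by rw [sub_smul, one_smul]
      _ ≤ c • P := smul_le_smul_of_nonneg_right (le_max_left _ _) hP0
  have hge : -(c • P) ≤ P + H :=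
    calc -(c • P) = (-c) • P := (neg_smul c P).symm
      _ ≤ (1 - b) • P :=
        smul_le_smul_of_nonneg_right (neg_le.2 ((neg_sub 1 b).trans_le (le_max_right _ _))) hP0
      _ = P - b • P := by rw [sub_smul, one_smul]
      _ ≤ P - -H := sub_le_sub_left hb P
      _ = P + H := sub_neg_eq_add P H
  have hinv : 1 + P⁻¹ * H = P⁻¹ * (P + H) := by
    rw [mul_add, nonsing_inv_mul P hP.det_pos.ne'.isUnit]
  rw [hinv]
  exact wMatNorm_le_of_wq_le_s1 hc (dotProduct_mulVec_inv_mul_le hP (hP.isHermitian.add hH) hle hge)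

theorem esd_update_stability_general {k : ℕ} (P H : Matrix (Fin k) (Fin k) ℝ)
    (hP : P.PosDef) (hH : H.IsHermitian) (α β : ℝ) (hβ : 0 < β)
    (hlow : (-H - α • (1 : Matrix (Fin k) (Fin k) ℝ)).PosSemidef)
    (hup : (β • (1 : Matrix (Fin k) (Fin k) ℝ) - -H).PosSemidef)
    (hpen : max (-α) 0 < lMin P) :
    wMatNorm P (1 + P⁻¹ * H) ≤
      1 - min (max α 0 / lMax P - max (-α) 0 / lMin P) (2 - β / lMin P) := by
  have hn : 0 < lMin P := (le_max_right _ _).trans_lt hpen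
  have := nonempty_of_lMin_ne_zero hn.ne'
  have hPn := lMin_smul_one_le hP.isHermitian
  have hPM := le_lMax_smul_one hP.isHermitian
  have hM : 0 < lMax P := hn.trans_le (PosDef.one.le_of_smul_le_smul (hPn.trans hPM))
  have ha : (max α 0 / lMax P - max (-α) 0 / lMin P) • P ≤ -H :=
    calc _ = (α⁺ / lMax P) • P - (α⁻ / lMin P) • P := sub_smul _ _ P
      _ ≤ α⁺ • 1 - α⁻ • 1 := sub_le_sub (div_smul_le_smul_of_le_smul (posPart_nonneg α) hM hPM)
          (smul_le_div_smul_of_smul_le (negPart_nonneg α) hn hPn)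
      _ = α • 1 := by rw [← sub_smul, posPart_sub_negPart]
      _ ≤ -H := Matrix.le_iff.2 hlow
  have hb : -H ≤ (β / lMin P) • P :=
    (Matrix.le_iff.2 hup).trans (smul_le_div_smul_of_smul_le hβ.le hn hPn)
  calc _ ≤ max (1 - _) (β / lMin P - 1) := wMatNorm_one_add_inv_mul_le hP hH ha hb
    _ = _ := by rw [← max_sub_sub_left]; congr 1; ring

/-- Lemma 1, inequality (9): stability of the explicit score-driven update.
If `P ≻ 0` is symmetric, `H` is symmetric with `α·I ⪯ −H ⪯ β·I`, `α ≤ β`, `0 < β`, and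
`λ_min(P) > α⁻`, then
`‖I + P⁻¹H‖_P ≤ 1 − min{α⁺/λ_max(P) − α⁻/λ_min(P), 2 − β/λ_min(P)}`. -/
theorem esd_update_stability {k : ℕ} (P H : Matrix (Fin k) (Fin k) ℝ)
    (hP : P.PosDef) (hH : H.IsHermitian) (α β : ℝ) (hαβ : α ≤ β) (hβ : 0 < β)
    (hlow : (-H - α • (1 : Matrix (Fin k) (Fin k) ℝ)).PosSemidef)
    (hup : (β • (1 : Matrix (Fin k) (Fin k) ℝ) - -H).PosSemidef)
    (hpen : max (-α) 0 < lMin P) :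
    wMatNorm P (1 + P⁻¹ * H) ≤
      1 - min (max α 0 / lMax P - max (-α) 0 / lMin P) (2 - β / lMin P) :=
  esd_update_stability_general P H hP hH α β hβ hlow hup hpen
end

section
/- (Theorem 2, MSE contraction of the ISD update step.) Let (Ω, 𝔽, ℙ) be a probability space. Let ℓ : ℝⁿ × ℝ^k → ℝ be such that for every y ∈ ℝⁿ the map θ ↦ ℓ(y, θ) is twice continuously differentiable with Hessian H(y, θ) satisfying α·I ⪯ −H(y, θ) for all y, θ, where α ∈ ℝ. Let P ∈ ℝ^{k×k} be symmetric positive definite with λ_min(P) > α⁻. Let Y : Ω → ℝⁿ, θ* : Ω → ℝ^k and θ_pred : Ω → ℝ^k be random vectors, all relevant quantities square-integrable, such that (i) 𝔼[⟨θ_pred − θ*, ∇ℓ(Y, θ*)⟩] = 0 and (ii) 𝔼[‖∇ℓ(Y, θ*)‖²] ≤ σ² < ∞, where ∇ℓ denotes the gradient in the second argument. Let θ_upd : Ω → ℝ^k be a measurable random vector satisfying pathwise the implicit update θ_upd = θ_pred + P⁻¹∇ℓ(Y, θ_upd). Then 𝔼[‖θ_upd − θ*‖²_P] ≤ a·𝔼[‖θ_pred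 − θ*‖²_P] + a·σ²/λ_min(P), where a := (1 − α⁺/(λ_max(P) + α⁺) + α⁻/(λ_min(P) − α⁻))². -/
/-!
Write `x = θ_upd − θ*`, `e = θ_pred − θ*`, `g(θ) = ∇ℓ(Y, θ)` and `v = e + P⁻¹ g(θ*)`. The update
gives `P x = P v + g(θ_upd) − g(θ*)`, and integrating the Hessian bound along the segment from
`θ*` to `θ_upd` gives `⟨x, g(θ_upd) − g(θ*)⟩ ≤ −α ‖x‖²`. Comparing `‖x‖²` with `‖x‖²_P` through
`λ_min(P)` and `λ_max(P)` turns this into `c ‖x‖²_P ≤ ⟨x, v⟩_P` with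
`c = 1 + α⁺/λ_max − α⁻/λ_min > 0`, hence `c² ‖x‖²_P ≤ ‖v‖²_P`; and `1/c` is exactly `√a`.
Finally `‖v‖²_P = ‖e‖²_P + 2 ⟨e, g(θ*)⟩ + g(θ*)ᵀ P⁻¹ g(θ*)`, whose cross term vanishes in
expectation and whose last term is at most `‖g(θ*)‖² / λ_min(P)`.
-/

open Matrix

section

variable {ι : Type*} [Fintype ι]

lemma Matrix.PosSemidef.dotProduct_mulVec_le {A B : Matrix ι ι ℝ} (h : (B - A).PosSemidef)
    (x : ι → ℝ) : x ⬝ᵥ A *ᵥ x ≤ x ⬝ᵥ B *ᵥ x := by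
  have := h.dotProduct_mulVec_nonneg x
  rw [star_trivial, sub_mulVec, dotProduct_sub] at this
  linarith

lemma Matrix.dotProduct_smul_one_mulVec [DecidableEq ι] (c : ℝ) (x : ι → ℝ) :
    x ⬝ᵥ (c • (1 : Matrix ι ι ℝ)) *ᵥ x = c * (x ⬝ᵥ x) := by
  rw [smul_mulVec, one_mulVec, dotProduct_smul, smul_eq_mul]

lemma Matrix.PosSemidef.mul_dotProduct_mulVec_le {P : Matrix ι ι ℝ} (hP : P.PosSemidef)
    {c : ℝ} (hc : 0 ≤ c) {x v : ι → ℝ} (h : c * (x ⬝ᵥ P *ᵥ x) ≤ x ⬝ᵥ P *ᵥ v) :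
    c * (x ⬝ᵥ P *ᵥ v) ≤ v ⬝ᵥ P *ᵥ v := by
  have hsq := hP.dotProduct_mulVec_nonneg (c • x - v)
  have hsymm : v ⬝ᵥ P *ᵥ x = x ⬝ᵥ P *ᵥ v := by
    rw [dotProduct_mulVec, ← mulVec_transpose, ← conjTranspose_eq_transpose_of_trivial,
      hP.isHermitian.eq, dotProduct_comm]
  simp only [star_trivial, mulVec_sub, mulVec_smul, dotProduct_sub, sub_dotProduct,
    dotProduct_smul, smul_dotProduct, smul_eq_mul, hsymm] at hsq
  nlinarith

lemma dotProduct_sub_le_of_hasFDerivAt {G : (ι → ℝ) → ι → ℝ} {H : (ι → ℝ) → Matrix ι ι ℝ}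
    {c : ℝ} (hG : ∀ θ, HasFDerivAt G (H θ).mulVecLin.toContinuousLinearMap θ)
    (hH : ∀ θ d, d ⬝ᵥ H θ *ᵥ d ≤ c * (d ⬝ᵥ d)) (u v : ι → ℝ) :
    (u - v) ⬝ᵥ (G u - G v) ≤ c * ((u - v) ⬝ᵥ (u - v)) := by
  set d := u - v
  have hpath (t : ℝ) : HasDerivAt (fun t : ℝ => v + t • d) d t := by
    simpa using ((hasDerivAt_id t).smul_const d).const_add v
  have hGpath (t : ℝ) : HasDerivAt (fun t => G (v + t • d)) (H (v + t • d) *ᵥ d) t :=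
    (hG _).comp_hasDerivAt t (hpath t)
  have hf (t : ℝ) : HasDerivAt (fun t => d ⬝ᵥ G (v + t • d) - c * t * (d ⬝ᵥ d))
      (d ⬝ᵥ H (v + t • d) *ᵥ d - c * (d ⬝ᵥ d)) t := by
    have hdot : HasDerivAt (fun t => d ⬝ᵥ G (v + t • d)) (d ⬝ᵥ H (v + t • d) *ᵥ d) t := by
      simpa only [dotProduct] using
        HasDerivAt.fun_sum fun i _ => (hasDerivAt_pi.1 (hGpath t) i).const_mul (d i)
    simpa using hdot.fun_sub (((hasDerivAt_id' t).const_mul c).mul_const (d ⬝ᵥ d))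
  have hanti := antitone_of_hasDerivAt_nonpos hf fun t => sub_nonpos.2 (hH _ d)
  have := hanti zero_le_one
  simp only [zero_smul, add_zero, one_smul, mul_zero, zero_mul, sub_zero, mul_one,
    show v + d = u by simp [d]] at this
  rw [dotProduct_sub]
  linarith

end

section

variable {k : ℕ}

lemma lMin_le_lMax_s7 (A : Matrix (Fin k) (Fin k) ℝ) : lMin A ≤ lMax A := by
  unfold lMin lMax
  split_ifs with hA
  · cases isEmpty_or_nonempty (Fin k)
    · simp
    · exact ciInf_le_ciSup (Set.finite_range _).bddBelow (Set.finite_range _).bddAbove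
  · rfl

lemma Matrix.PosSemidef.lMin_nonneg {A : Matrix (Fin k) (Fin k) ℝ} (hA : A.PosSemidef) :
    0 ≤ lMin A := by
  rw [lMin, dif_pos hA.isHermitian]
  exact Real.iInf_nonneg hA.eigenvalues_nonneg

open scoped MatrixOrder in
lemma Matrix.IsHermitian.posSemidef_sub_lMin_smul_one {A : Matrix (Fin k) (Fin k) ℝ}
    (hA : A.IsHermitian) : (A - lMin A • 1).PosSemidef := by
  have : algebraMap ℝ _ (lMin A) ≤ A := by
    rw [algebraMap_le_iff_le_spectrum (ha := hA.isSelfAdjoint),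
      hA.spectrum_real_eq_range_eigenvalues]
    rintro _ ⟨i, rfl⟩
    rw [lMin, dif_pos hA]
    exact ciInf_le (Set.finite_range _).bddBelow i
  rwa [Algebra.algebraMap_eq_smul_one] at this

open scoped MatrixOrder in
lemma Matrix.IsHermitian.posSemidef_lMax_smul_one_sub {A : Matrix (Fin k) (Fin k) ℝ}
    (hA : A.IsHermitian) : (lMax A • 1 - A).PosSemidef := by
  have : A ≤ algebraMap ℝ _ (lMax A) := by
    rw [le_algebraMap_iff_spectrum_le (ha := hA.isSelfAdjoint),
      hA.spectrum_real_eq_range_eigenvalues]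
    rintro _ ⟨i, rfl⟩
    rw [lMax, dif_pos hA]
    exact le_ciSup (Set.finite_range _).bddAbove i
  rwa [Algebra.algebraMap_eq_smul_one] at this

lemma Matrix.IsHermitian.lMin_mul_dotProduct_le {A : Matrix (Fin k) (Fin k) ℝ}
    (hA : A.IsHermitian) (x : Fin k → ℝ) : lMin A * (x ⬝ᵥ x) ≤ x ⬝ᵥ A *ᵥ x := by
  simpa [dotProduct_smul_one_mulVec] using
    hA.posSemidef_sub_lMin_smul_one.dotProduct_mulVec_le x

lemma Matrix.IsHermitian.dotProduct_mulVec_le_lMax_mul {A : Matrix (Fin k) (Fin k) ℝ}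
    (hA : A.IsHermitian) (x : Fin k → ℝ) : x ⬝ᵥ A *ᵥ x ≤ lMax A * (x ⬝ᵥ x) := by
  simpa [dotProduct_smul_one_mulVec] using
    hA.posSemidef_lMax_smul_one_sub.dotProduct_mulVec_le x

lemma wq_add_inv_mulVec {P : Matrix (Fin k) (Fin k) ℝ} (hP : P.IsHermitian) (hdet : IsUnit P.det)
    (e g : Fin k → ℝ) : wq P (e + P⁻¹ *ᵥ g) = wq P e + 2 * (e ⬝ᵥ g) + g ⬝ᵥ P⁻¹ *ᵥ g := by
  have hPt : Pᵀ = P := by rw [← conjTranspose_eq_transpose_of_trivial, hP.eq]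
  have hcross : P⁻¹ *ᵥ g ⬝ᵥ P *ᵥ e = e ⬝ᵥ g := by
    rw [dotProduct_mulVec, ← mulVec_transpose, hPt, mulVec_mulVec, mul_nonsing_inv P hdet,
      one_mulVec, dotProduct_comm]
  simp only [wq, mulVec_add, dotProduct_add, add_dotProduct, mulVec_mulVec,
    mul_nonsing_inv P hdet, one_mulVec, hcross]
  rw [dotProduct_comm (P⁻¹ *ᵥ g) g]
  ring

lemma Matrix.PosDef.lMin_mul_dotProduct_inv_mulVec_le {P : Matrix (Fin k) (Fin k) ℝ}
    (hP : P.PosDef) (g : Fin k → ℝ) : lMin P * (g ⬝ᵥ P⁻¹ *ᵥ g) ≤ g ⬝ᵥ g := by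
  set z := P⁻¹ *ᵥ g
  have hPz : P *ᵥ z = g := by
    rw [mulVec_mulVec, mul_nonsing_inv P ((isUnit_iff_isUnit_det P).1 hP.isUnit), one_mulVec]
  have hray : lMin P * (z ⬝ᵥ 1 *ᵥ z) ≤ z ⬝ᵥ 1 *ᵥ g := by
    simpa [hPz] using hP.isHermitian.lMin_mul_dotProduct_le z
  simpa [dotProduct_comm z g] using
    PosSemidef.one.mul_dotProduct_mulVec_le hP.posSemidef.lMin_nonneg hray

lemma Matrix.PosDef.wq_add_inv_mulVec_le {P : Matrix (Fin k) (Fin k) ℝ} (hP : P.PosDef)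
    (hl : 0 < lMin P) (e g : Fin k → ℝ) :
    wq P (e + P⁻¹ *ᵥ g) ≤ wq P e + 2 * (e ⬝ᵥ g) + (lMin P)⁻¹ * (g ⬝ᵥ g) := by
  rw [wq_add_inv_mulVec hP.isHermitian ((isUnit_iff_isUnit_det P).1 hP.isUnit)]
  gcongr
  exact (le_inv_mul_iff₀ hl).2 (hP.lMin_mul_dotProduct_inv_mulVec_le _)

lemma Matrix.IsHermitian.neg_mul_dotProduct_self_le {P : Matrix (Fin k) (Fin k) ℝ}
    (hP : P.IsHermitian) (hl : 0 < lMin P) (α : ℝ) (x : Fin k → ℝ) :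
    -α * (x ⬝ᵥ x) ≤ (max (-α) 0 / lMin P - max α 0 / lMax P) * wq P x := by
  have hL : 0 < lMax P := hl.trans_le (lMin_le_lMax_s7 P)
  have hneg : max (-α) 0 * (x ⬝ᵥ x) ≤ max (-α) 0 / lMin P * wq P x := by
    rw [div_mul_eq_mul_div, le_div_iff₀ hl, mul_assoc, mul_comm (x ⬝ᵥ x)]
    exact mul_le_mul_of_nonneg_left (hP.lMin_mul_dotProduct_le x) (le_max_right _ _)
  have hpos : max α 0 / lMax P * wq P x ≤ max α 0 * (x ⬝ᵥ x) := by
    rw [div_mul_eq_mul_div, div_le_iff₀ hL, mul_assoc, mul_comm (x ⬝ᵥ x)]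
    exact mul_le_mul_of_nonneg_left (hP.dotProduct_mulVec_le_lMax_mul x) (le_max_right _ _)
  have hα : -α * (x ⬝ᵥ x) = max (-α) 0 * (x ⬝ᵥ x) - max α 0 * (x ⬝ᵥ x) := by
    rcases le_total 0 α with h | h <;> simp [h]
  rw [hα, sub_mul]
  linarith

/-- `isdRate α (lMax P) (lMin P)` is the square root of the paper's contraction factor `a`. -/
noncomputable def isdRate (α L l : ℝ) : ℝ :=
  1 - max α 0 / (L + max α 0) + max (-α) 0 / (l - max (-α) 0)

lemma isdRate_mul_eq_one {α L l : ℝ} (hL : 0 < L) (hl : max (-α) 0 < l) :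
    isdRate α L l * (1 + max α 0 / L - max (-α) 0 / l) = 1 := by
  rw [isdRate]
  rcases le_total 0 α with h | h
  · have : 0 < L + α := by linarith
    simp [h] at hl ⊢
    field_simp
    ring
  · simp [h] at hl ⊢
    have : 0 < l := by linarith
    have : 0 < l + α := by linarith
    field_simp
    ring

lemma wq_sub_le_of_eq_add_inv_mulVec {g : (Fin k → ℝ) → Fin k → ℝ} {α : ℝ}
    (hg : ∀ u v, (u - v) ⬝ᵥ (g u - g v) ≤ -α * ((u - v) ⬝ᵥ (u - v)))
    {P : Matrix (Fin k) (Fin k) ℝ} (hP : P.PosDef) (hpen : max (-α) 0 < lMin P)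
    {θs θp θu : Fin k → ℝ} (hupd : θu = θp + P⁻¹ *ᵥ g θu) :
    wq P (θu - θs) ≤
      isdRate α (lMax P) (lMin P) ^ 2 *
        (wq P (θp - θs) + 2 * ((θp - θs) ⬝ᵥ g θs) + (lMin P)⁻¹ * (g θs ⬝ᵥ g θs)) := by
  set b := isdRate α (lMax P) (lMin P)
  set c := 1 + max α 0 / lMax P - max (-α) 0 / lMin P
  set x := θu - θs
  set e := θp - θs
  set v := e + P⁻¹ *ᵥ g θs
  have hl : 0 < lMin P := (le_max_right _ _).trans_lt hpen
  have hL : 0 < lMax P := hl.trans_le (lMin_le_lMax_s7 P)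
  have hdet : IsUnit P.det := (isUnit_iff_isUnit_det P).1 hP.isUnit
  have hc : 0 ≤ c := by
    have : max (-α) 0 / lMin P < 1 := (div_lt_one hl).2 hpen
    have : 0 ≤ max α 0 / lMax P := by positivity
    linarith
  have hPx : P *ᵥ x = P *ᵥ v + (g θu - g θs) := by
    have hx : x = e + P⁻¹ *ᵥ g θu := by
      simp only [x, e]
      conv_lhs => rw [hupd]
      abel
    simp only [hx, v, mulVec_add, mulVec_mulVec, mul_nonsing_inv P hdet, one_mulVec]
    abel
  have hxv : c * wq P x ≤ x ⬝ᵥ P *ᵥ v := by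
    have hsplit : wq P x = x ⬝ᵥ P *ᵥ v + x ⬝ᵥ (g θu - g θs) := by rw [wq, hPx, dotProduct_add]
    have := (hg θu θs).trans (hP.isHermitian.neg_mul_dotProduct_self_le hl α x)
    simp only [c]
    linarith
  have hxx : c ^ 2 * wq P x ≤ wq P v := by
    calc c ^ 2 * wq P x = c * (c * wq P x) := by ring
      _ ≤ c * (x ⬝ᵥ P *ᵥ v) := by gcongr
      _ ≤ wq P v := hP.posSemidef.mul_dotProduct_mulVec_le hc hxv
  calc wq P x = (b * c) ^ 2 * wq P x := by rw [isdRate_mul_eq_one hL hpen, one_pow, one_mul]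
    _ = b ^ 2 * (c ^ 2 * wq P x) := by ring
    _ ≤ b ^ 2 * wq P v := by gcongr
    _ ≤ _ := by gcongr; exact hP.wq_add_inv_mulVec_le hl e (g θs)

end

open MeasureTheory

theorem isd_update_mse_contraction_general {n k : ℕ}
    {Ω : Type*} [MeasurableSpace Ω] (μ : Measure Ω)
    (G : (Fin n → ℝ) → (Fin k → ℝ) → (Fin k → ℝ))
    (Hs : (Fin n → ℝ) → (Fin k → ℝ) → Matrix (Fin k) (Fin k) ℝ)
    (α : ℝ)
    (hhess : ∀ y θv, HasFDerivAt (G y)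
      (LinearMap.toContinuousLinearMap (Hs y θv).mulVecLin) θv)
    (hcurv : ∀ y θv, (-(Hs y θv) - α • (1 : Matrix (Fin k) (Fin k) ℝ)).PosSemidef)
    (P : Matrix (Fin k) (Fin k) ℝ) (hP : P.PosDef) (hpen : max (-α) 0 < lMin P)
    (Y : Ω → (Fin n → ℝ)) (θstar θpred θupd : Ω → (Fin k → ℝ)) (σ : ℝ)
    (hintpred : Integrable (fun w => wq P (θpred w - θstar w)) μ)
    (hintupd : Integrable (fun w => wq P (θupd w - θstar w)) μ)
    (hintscore : Integrable (fun w => G (Y w) (θstar w) ⬝ᵥ G (Y w) (θstar w)) μ)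
    (hintcross : Integrable (fun w => (θpred w - θstar w) ⬝ᵥ G (Y w) (θstar w)) μ)
    (horth : ∫ w, (θpred w - θstar w) ⬝ᵥ G (Y w) (θstar w) ∂μ = 0)
    (hsig : ∫ w, G (Y w) (θstar w) ⬝ᵥ G (Y w) (θstar w) ∂μ ≤ σ ^ 2)
    (hupd : ∀ w, θupd w = θpred w + P⁻¹ *ᵥ G (Y w) (θupd w)) :
    ∫ w, wq P (θupd w - θstar w) ∂μ ≤
      (1 - max α 0 / (lMax P + max α 0) + max (-α) 0 / (lMin P - max (-α) 0)) ^ 2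
          * ∫ w, wq P (θpred w - θstar w) ∂μ
        + (1 - max α 0 / (lMax P + max α 0) + max (-α) 0 / (lMin P - max (-α) 0)) ^ 2
          * σ ^ 2 / lMin P := by
  set b := isdRate α (lMax P) (lMin P)
  have hHs (y θ d) : d ⬝ᵥ Hs y θ *ᵥ d ≤ -α * (d ⬝ᵥ d) := by
    have := (hcurv y θ).dotProduct_mulVec_le d
    rw [dotProduct_smul_one_mulVec, neg_mulVec, dotProduct_neg] at this
    linarith
  have hpath (w : Ω) := wq_sub_le_of_eq_add_inv_mulVec
    (dotProduct_sub_le_of_hasFDerivAt (hhess (Y w)) (hHs (Y w))) hP hpen (θs := θstar w) (hupd w)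
  have hl : 0 < lMin P := (le_max_right _ _).trans_lt hpen
  calc ∫ w, wq P (θupd w - θstar w) ∂μ
      ≤ ∫ w, b ^ 2 * (wq P (θpred w - θstar w) + 2 * ((θpred w - θstar w) ⬝ᵥ G (Y w) (θstar w))
          + (lMin P)⁻¹ * (G (Y w) (θstar w) ⬝ᵥ G (Y w) (θstar w))) ∂μ :=
        integral_mono hintupd
          (((hintpred.add (hintcross.const_mul 2)).add (hintscore.const_mul _)).const_mul _) hpath
    _ = b ^ 2 * ∫ w, wq P (θpred w - θstar w) ∂μ
          + b ^ 2 * (∫ w, G (Y w) (θstar w) ⬝ᵥ G (Y w) (θstar w) ∂μ) / lMin P := by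
        rw [integral_const_mul, integral_add ?_ (hintscore.const_mul _),
          integral_add hintpred (hintcross.const_mul 2), integral_const_mul, integral_const_mul,
          horth]
        · ring
        · exact hintpred.add (hintcross.const_mul 2)
    _ ≤ b ^ 2 * ∫ w, wq P (θpred w - θstar w) ∂μ + b ^ 2 * σ ^ 2 / lMin P := by gcongr

/-- Theorem 2, MSE contraction of the implicit score-driven update step.
`ℓ y θ` is the postulated log density, `G = ∇ℓ` its gradient and `Hs = ∇²ℓ` its (continuous,
symmetric) Hessian in `θ`, with `α·I ⪯ −Hs(y,θ)` everywhere and `λ_min(P) > α⁻`.  If the score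
at the pseudo-truth is orthogonal to the prediction error and has second moment at most `σ²`,
and `θ_upd = θ_pred + P⁻¹∇ℓ(Y, θ_upd)` pathwise, then
`𝔼‖θ_upd − θ*‖²_P ≤ a 𝔼‖θ_pred − θ*‖²_P + a σ²/λ_min(P)` with
`a = (1 − α⁺/(λ_max(P)+α⁺) + α⁻/(λ_min(P)−α⁻))²`. -/
theorem isd_update_mse_contraction {n k : ℕ}
    {Ω : Type*} [MeasurableSpace Ω] (μ : Measure Ω) [IsProbabilityMeasure μ]
    (ℓ : (Fin n → ℝ) → (Fin k → ℝ) → ℝ)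
    (G : (Fin n → ℝ) → (Fin k → ℝ) → (Fin k → ℝ))
    (Hs : (Fin n → ℝ) → (Fin k → ℝ) → Matrix (Fin k) (Fin k) ℝ)
    (α : ℝ)
    (hgrad : ∀ y θv, HasFDerivAt (ℓ y)
      (∑ i, G y θv i • (ContinuousLinearMap.proj i : (Fin k → ℝ) →L[ℝ] ℝ)) θv)
    (hhess : ∀ y θv, HasFDerivAt (G y)
      (LinearMap.toContinuousLinearMap (Hs y θv).mulVecLin) θv)
    (hHscont : ∀ y, Continuous (Hs y))
    (hHssymm : ∀ y θv, (Hs y θv).IsHermitian)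
    (hcurv : ∀ y θv, (-(Hs y θv) - α • (1 : Matrix (Fin k) (Fin k) ℝ)).PosSemidef)
    (P : Matrix (Fin k) (Fin k) ℝ) (hP : P.PosDef) (hpen : max (-α) 0 < lMin P)
    (Y : Ω → (Fin n → ℝ)) (θstar θpred θupd : Ω → (Fin k → ℝ)) (σ : ℝ)
    (hintpred : Integrable (fun w => wq P (θpred w - θstar w)) μ)
    (hintupd : Integrable (fun w => wq P (θupd w - θstar w)) μ)
    (hintscore : Integrable (fun w => G (Y w) (θstar w) ⬝ᵥ G (Y w) (θstar w)) μ)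
    (hintcross : Integrable (fun w => (θpred w - θstar w) ⬝ᵥ G (Y w) (θstar w)) μ)
    (horth : ∫ w, (θpred w - θstar w) ⬝ᵥ G (Y w) (θstar w) ∂μ = 0)
    (hsig : ∫ w, G (Y w) (θstar w) ⬝ᵥ G (Y w) (θstar w) ∂μ ≤ σ ^ 2)
    (hupd : ∀ w, θupd w = θpred w + P⁻¹ *ᵥ G (Y w) (θupd w)) :
    ∫ w, wq P (θupd w - θstar w) ∂μ ≤
      (1 - max α 0 / (lMax P + max α 0) + max (-α) 0 / (lMin P - max (-α) 0)) ^ 2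
          * ∫ w, wq P (θpred w - θstar w) ∂μ
        + (1 - max α 0 / (lMax P + max α 0) + max (-α) 0 / (lMin P - max (-α) 0)) ^ 2
          * σ ^ 2 / lMin P :=
  isd_update_mse_contraction_general μ G Hs α hhess hcurv P hP hpen Y θstar θpred θupd σ hintpred
    hintupd hintscore hintcross horth hsig hupd
end

section
/- (Corollary 2, optimal penalty parameter for the ISD filter.) Let α > 0, σ > 0, σ_ξ > 0 and φ ≥ 0 (representing ‖Φ₀‖). Define f(ρ) := (σ² + ρ²σ_ξ²) / ((ρ + α)² − ρ²φ²) on the domain D := {ρ > 0 : (ρ + α)² > ρ²φ²} = {ρ > 0 : ρ(φ − 1) < α}. Then ρ* := [ σ²(1 − φ²) − α²σ_ξ² + √( (α²σ_ξ² − σ²(1 − φ²))² + 4α²σ²σ_ξ² ) ] / (2α σ_ξ²) is a finite positive number belonging to D, and f(ρ*) ≤ f(ρ) for all ρ ∈ D; that is, ρ* is the global minimizer of f on D. -/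
/-- Corollary 2 (optimal penalty parameter for the ISD filter).
For `α > 0`, `σ > 0`, `σ_ξ > 0`, `φ ≥ 0` (representing `‖Φ₀‖`) and
`f(ρ) = (σ² + ρ²σ_ξ²)/((ρ + α)² − ρ²φ²)` on `D = {ρ > 0 : (ρ + α)² > ρ²φ²}`, the point
`ρ* = (σ²(1 − φ²) − α²σ_ξ² + √((α²σ_ξ² − σ²(1 − φ²))² + 4α²σ²σ_ξ²))/(2ασ_ξ²)` is a finite
positive number belonging to `D`, and it is the global minimizer of `f` on `D`. -/
theorem optimal_penalty_parameter_isd (α σ σξ φ : ℝ)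
    (hα : 0 < α) (hσ : 0 < σ) (hσξ : 0 < σξ) (hφ : 0 ≤ φ)
    (ρstar : ℝ)
    (hρ : ρstar = (σ ^ 2 * (1 - φ ^ 2) - α ^ 2 * σξ ^ 2 +
        Real.sqrt ((α ^ 2 * σξ ^ 2 - σ ^ 2 * (1 - φ ^ 2)) ^ 2
          + 4 * α ^ 2 * σ ^ 2 * σξ ^ 2)) / (2 * α * σξ ^ 2)) :
    (0 < ρstar ∧ ρstar ^ 2 * φ ^ 2 < (ρstar + α) ^ 2) ∧
      ∀ ρ : ℝ, 0 < ρ → ρ ^ 2 * φ ^ 2 < (ρ + α) ^ 2 →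
        (σ ^ 2 + ρstar ^ 2 * σξ ^ 2) / ((ρstar + α) ^ 2 - ρstar ^ 2 * φ ^ 2) ≤
          (σ ^ 2 + ρ ^ 2 * σξ ^ 2) / ((ρ + α) ^ 2 - ρ ^ 2 * φ ^ 2) := by
  set B : ℝ := α ^ 2 * σξ ^ 2 - σ ^ 2 * (1 - φ ^ 2) with hB
  set s : ℝ := Real.sqrt (B ^ 2 + 4 * α ^ 2 * σ ^ 2 * σξ ^ 2) with hs
  have hsnn : 0 ≤ s := Real.sqrt_nonneg _
  have hs2 : s ^ 2 = B ^ 2 + 4 * α ^ 2 * σ ^ 2 * σξ ^ 2 := by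
    rw [hs]
    exact Real.sq_sqrt (by positivity)
  have hBs : B < s := by
    nlinarith [sq_nonneg (s + B), sq_nonneg (s - B), mul_pos (mul_pos hα hσ) hσξ]
  have hden : (0:ℝ) < 2 * α * σξ ^ 2 := by positivity
  have hρ' : 2 * α * σξ ^ 2 * ρstar = -B + s := by
    rw [hρ]
    field_simp
    ring
  have hρpos : 0 < ρstar := by
    have hnum : 0 < -B + s := by linarith
    nlinarith
  -- key quadratic relation satisfied by ρstar
  have key : α * σξ ^ 2 * ρstar ^ 2 + B * ρstar - α * σ ^ 2 = 0 := by
    have h4 : (4 * α * σξ ^ 2) * (α * σξ ^ 2 * ρstar ^ 2 + B * ρstar - α * σ ^ 2) = 0 := by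
      linear_combination (2 * α * σξ ^ 2 * ρstar + s + B) * hρ' + hs2
    have h4' : (4 * α * σξ ^ 2) ≠ 0 := by positivity
    rcases mul_eq_zero.mp h4 with h | h
    · exact absurd h h4'
    · exact h
  have hk2 : ρstar * (α * σξ ^ 2 * ρstar ^ 2 + B * ρstar - α * σ ^ 2) = 0 := by
    rw [key, mul_zero]
  have hNstar : 0 < σ ^ 2 + σξ ^ 2 * ρstar ^ 2 := by positivity
  have h1 : 0 < α * (ρstar + α) * (σ ^ 2 + σξ ^ 2 * ρstar ^ 2) := by
    apply mul_pos (mul_pos hα (by linarith)) hNstar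
  have hDstar : ρstar ^ 2 * φ ^ 2 < (ρstar + α) ^ 2 := by
    nlinarith [hk2, h1, sq_nonneg σ, hσ.le]
  refine ⟨⟨hρpos, hDstar⟩, ?_⟩
  intro ρ hρp hDρ
  have hDstar' : 0 < (ρstar + α) ^ 2 - ρstar ^ 2 * φ ^ 2 := by linarith
  have hDρ' : 0 < (ρ + α) ^ 2 - ρ ^ 2 * φ ^ 2 := by linarith
  rw [div_le_div_iff₀ hDstar' hDρ']
  have hk3 : (ρ ^ 2 - ρstar ^ 2) * (α * σξ ^ 2 * ρstar ^ 2 + B * ρstar - α * σ ^ 2) = 0 := by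
    rw [key, mul_zero]
  have hmain : ρstar * ((σ ^ 2 + ρ ^ 2 * σξ ^ 2) * ((ρstar + α) ^ 2 - ρstar ^ 2 * φ ^ 2)
      - (σ ^ 2 + ρstar ^ 2 * σξ ^ 2) * ((ρ + α) ^ 2 - ρ ^ 2 * φ ^ 2))
      = α * (ρ - ρstar) ^ 2 * (σ ^ 2 + σξ ^ 2 * ρstar ^ 2)
        + (ρ ^ 2 - ρstar ^ 2) * (α * σξ ^ 2 * ρstar ^ 2 + B * ρstar - α * σ ^ 2) := by
    rw [hB]; ring
  have hrhs : 0 ≤ α * (ρ - ρstar) ^ 2 * (σ ^ 2 + σξ ^ 2 * ρstar ^ 2) :=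
    mul_nonneg (mul_nonneg hα.le (sq_nonneg _)) hNstar.le
  nlinarith [hmain, hk3, hrhs, hρpos]
end

section
/- (Example 4, optimal learning rate for the AR(1)-plus-noise model.) Let σ_ε > 0, σ_ξ > 0 and φ₀ ∈ [−1, 1]. Define h(η) := (σ_ε²η² + σ_ξ²σ_ε⁴) / (η² + 2σ_ε²η + (1 − φ₀²)σ_ε⁴) for η > 0. Then η* := [ σ_ξ² − σ_ε²(1 − φ₀²) + √( σ_ξ⁴ + σ_ε⁴(1 − φ₀²)² + 2σ_ξ²σ_ε²(1 + φ₀²) ) ] / 2 is positive and satisfies h(η*) ≤ h(η) for all η > 0; that is, η* is the global minimizer of h on (0, ∞). In the local-level case φ₀ = 1, η* simplifies to (σ_ξ² + √(σ_ξ⁴ + 4σ_ξ²σ_ε²))/2. -/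
/-- Example 4 (optimal learning rate for the AR(1)-plus-noise model).
For `σ_ε > 0`, `σ_ξ > 0`, `φ₀ ∈ [−1, 1]` and
`h(η) = (σ_ε²η² + σ_ξ²σ_ε⁴)/(η² + 2σ_ε²η + (1 − φ₀²)σ_ε⁴)` on `(0, ∞)`, the point
`η* = (σ_ξ² − σ_ε²(1 − φ₀²) + √(σ_ξ⁴ + σ_ε⁴(1 − φ₀²)² + 2σ_ξ²σ_ε²(1 + φ₀²)))/2` is positive
and is the global minimizer of `h` on `(0, ∞)`; when `φ₀ = 1` it simplifies to
`(σ_ξ² + √(σ_ξ⁴ + 4σ_ξ²σ_ε²))/2`. -/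
theorem optimal_learning_rate_ar1 (σε σξ φ₀ : ℝ)
    (hσε : 0 < σε) (hσξ : 0 < σξ) (hφ₀ : -1 ≤ φ₀) (hφ₀' : φ₀ ≤ 1)
    (ηstar : ℝ)
    (hη : ηstar = (σξ ^ 2 - σε ^ 2 * (1 - φ₀ ^ 2) +
        Real.sqrt (σξ ^ 4 + σε ^ 4 * (1 - φ₀ ^ 2) ^ 2
          + 2 * σξ ^ 2 * σε ^ 2 * (1 + φ₀ ^ 2))) / 2) :
    0 < ηstar ∧
      (∀ η : ℝ, 0 < η →
        (σε ^ 2 * ηstar ^ 2 + σξ ^ 2 * σε ^ 4)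
            / (ηstar ^ 2 + 2 * σε ^ 2 * ηstar + (1 - φ₀ ^ 2) * σε ^ 4) ≤
          (σε ^ 2 * η ^ 2 + σξ ^ 2 * σε ^ 4)
            / (η ^ 2 + 2 * σε ^ 2 * η + (1 - φ₀ ^ 2) * σε ^ 4)) ∧
      (φ₀ = 1 → ηstar = (σξ ^ 2 + Real.sqrt (σξ ^ 4 + 4 * σξ ^ 2 * σε ^ 2)) / 2) := by
  have ha : (0:ℝ) < σε ^ 2 := by positivity
  have hb : (0:ℝ) < σξ ^ 2 := by positivity
  have hc0 : (0:ℝ) ≤ 1 - φ₀ ^ 2 := by nlinarith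
  have hD0 : (0:ℝ) ≤ σξ ^ 4 + σε ^ 4 * (1 - φ₀ ^ 2) ^ 2
      + 2 * σξ ^ 2 * σε ^ 2 * (1 + φ₀ ^ 2) := by positivity
  obtain ⟨s, hs0, hs2, hηs⟩ : ∃ s : ℝ, 0 ≤ s ∧
      s ^ 2 = σξ ^ 4 + σε ^ 4 * (1 - φ₀ ^ 2) ^ 2 + 2 * σξ ^ 2 * σε ^ 2 * (1 + φ₀ ^ 2) ∧
      ηstar = (σξ ^ 2 - σε ^ 2 * (1 - φ₀ ^ 2) + s) / 2 :=
    ⟨_, Real.sqrt_nonneg _, Real.sq_sqrt hD0, hη⟩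
  have hs2' : s ^ 2 = (σε ^ 2 * (1 - φ₀ ^ 2) - σξ ^ 2) ^ 2 + 4 * σε ^ 2 * σξ ^ 2 := by
    rw [hs2]; ring
  have hηpos : 0 < ηstar := by
    rcases le_or_gt (σε ^ 2 * (1 - φ₀ ^ 2) - σξ ^ 2) 0 with h | h
    · rw [hηs]
      nlinarith [hs2', hs0, mul_pos ha hb]
    · have hlt : σε ^ 2 * (1 - φ₀ ^ 2) - σξ ^ 2 < s := by
        nlinarith [hs2', hs0, mul_pos ha hb]
      rw [hηs]; linarith
  have key : ηstar ^ 2 + (σε ^ 2 * (1 - φ₀ ^ 2) - σξ ^ 2) * ηstar - σε ^ 2 * σξ ^ 2 = 0 := by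
    rw [hηs]; linear_combination hs2' / 4
  have hseq : s = 2 * ηstar + σε ^ 2 * (1 - φ₀ ^ 2) - σξ ^ 2 := by rw [hηs]; ring
  refine ⟨hηpos, ?_, ?_⟩
  · intro η hηp
    have hDstar : 0 < ηstar ^ 2 + 2 * σε ^ 2 * ηstar + (1 - φ₀ ^ 2) * σε ^ 4 := by
      nlinarith [mul_pos ha hηpos, mul_nonneg hc0 (pow_nonneg hσε.le 4), sq_nonneg ηstar]
    have hDeta : 0 < η ^ 2 + 2 * σε ^ 2 * η + (1 - φ₀ ^ 2) * σε ^ 4 := by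
      nlinarith [mul_pos ha hηp, mul_nonneg hc0 (pow_nonneg hσε.le 4), sq_nonneg η]
    rw [div_le_div_iff₀ hDstar hDeta]
    have hF : (σε ^ 2 * η ^ 2 + σξ ^ 2 * σε ^ 4)
          * (ηstar ^ 2 + 2 * σε ^ 2 * ηstar + (1 - φ₀ ^ 2) * σε ^ 4)
        - (σε ^ 2 * ηstar ^ 2 + σξ ^ 2 * σε ^ 4)
          * (η ^ 2 + 2 * σε ^ 2 * η + (1 - φ₀ ^ 2) * σε ^ 4)
        = σε ^ 4 * s * (η - ηstar) ^ 2 := by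
      linear_combination (2 * σε ^ 4 * (η - ηstar)) * key
        - (σε ^ 4 * (η - ηstar) ^ 2) * hseq
    have hF0 : 0 ≤ σε ^ 4 * s * (η - ηstar) ^ 2 := by positivity
    linarith
  · intro h1
    subst h1
    rw [hη, show σξ ^ 4 + σε ^ 4 * (1 - 1 ^ 2) ^ 2 + 2 * σξ ^ 2 * σε ^ 2 * (1 + 1 ^ 2)
        = σξ ^ 4 + 4 * σξ ^ 2 * σε ^ 2 from by ring]
    norm_num
end

section
/- (Example 1(i): Kalman's level update is an ISD update.) Let P ∈ ℝ^{k×k} and Σ ∈ ℝ^{n×n} be symmetric positive definite, Z ∈ ℝ^{n×k}, d, y ∈ ℝⁿ, and θ₀ ∈ ℝ^k. Then the vector θ := θ₀ + P Zᵀ(Z P Zᵀ + Σ)⁻¹ (y − d − Zθ₀) (the Kalman level update with predicted covariance P) is the unique solution of the implicit-gradient equation θ = θ₀ + P Zᵀ Σ⁻¹ (y − d − Zθ), i.e., of the first-order condition of the ISD update with learning-rate matrix P for the Gaussian log density ℓ(y | θ) = −(1/2)(y − d − Zθ)ᵀΣ⁻¹(y − d − Zθ) + const. -/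
open Matrix

/-- Example 1(i): Kalman's level update is an ISD update.
For symmetric positive definite `P`, `S` (the observation-noise covariance `Σ`), `Z`, `d`, `y`
and a prediction `θ₀`, the Kalman level update
`θ = θ₀ + P Zᵀ(Z P Zᵀ + S)⁻¹(y − d − Zθ₀)` is the unique solution of the implicit-gradient
equation `θ = θ₀ + P ZᵀS⁻¹(y − d − Zθ)`, i.e., of the first-order condition of the ISD update
with learning-rate matrix `P` for the Gaussian log density. -/
theorem kalman_update_is_isd_update {n k : ℕ}
    (P : Matrix (Fin k) (Fin k) ℝ) (S : Matrix (Fin n) (Fin n) ℝ)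
    (hP : P.PosDef) (hS : S.PosDef)
    (Z : Matrix (Fin n) (Fin k) ℝ) (d y : Fin n → ℝ) (θ₀ : Fin k → ℝ) :
    (θ₀ + (P * Zᵀ * (Z * P * Zᵀ + S)⁻¹) *ᵥ (y - d - Z *ᵥ θ₀)
        = θ₀ + (P * Zᵀ * S⁻¹) *ᵥ
            (y - d - Z *ᵥ (θ₀ + (P * Zᵀ * (Z * P * Zᵀ + S)⁻¹) *ᵥ (y - d - Z *ᵥ θ₀)))) ∧
      ∀ θ : Fin k → ℝ, θ = θ₀ + (P * Zᵀ * S⁻¹) *ᵥ (y - d - Z *ᵥ θ) →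
        θ = θ₀ + (P * Zᵀ * (Z * P * Zᵀ + S)⁻¹) *ᵥ (y - d - Z *ᵥ θ₀) := by
  have hZPZ : (Z * P * Zᵀ).PosSemidef := by
    simpa [conjTranspose_eq_transpose_of_trivial] using
      hP.posSemidef.mul_mul_conjTranspose_same Z
  have hM : (Z * P * Zᵀ + S).PosDef := Matrix.PosDef.posSemidef_add hZPZ hS
  have hMi : (Z * P * Zᵀ + S) * (Z * P * Zᵀ + S)⁻¹ = 1 :=
    mul_nonsing_inv _ ((isUnit_iff_isUnit_det _).mp hM.isUnit)
  have hSi : S⁻¹ * S = 1 := nonsing_inv_mul S ((isUnit_iff_isUnit_det S).mp hS.isUnit)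
  have hPi : P * P⁻¹ = 1 := mul_nonsing_inv P ((isUnit_iff_isUnit_det P).mp hP.isUnit)
  obtain ⟨M, hMdef⟩ : ∃ M, Z * P * Zᵀ + S = M := ⟨_, rfl⟩
  rw [hMdef] at hMi hM
  obtain ⟨K, hKdef⟩ : ∃ K, P * Zᵀ * M⁻¹ = K := ⟨_, rfl⟩
  obtain ⟨A, hAdef⟩ : ∃ A, P * Zᵀ * S⁻¹ = A := ⟨_, rfl⟩
  obtain ⟨r, hrdef⟩ : ∃ r, y - d - Z *ᵥ θ₀ = r := ⟨_, rfl⟩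
  rw [hMdef, hKdef, hAdef, hrdef]
  have hAS : A * S = P * Zᵀ := by
    rw [← hAdef, Matrix.mul_assoc, hSi, Matrix.mul_one]
  -- key identity
  have key : A = K + A * Z * K := by
    calc A = A * M * M⁻¹ := by rw [Matrix.mul_assoc, hMi, Matrix.mul_one]
      _ = (A * (Z * P * Zᵀ) + P * Zᵀ) * M⁻¹ := by rw [← hMdef, Matrix.mul_add, hAS]
      _ = K + A * Z * K := by
          rw [Matrix.add_mul, add_comm, ← hKdef]
          congr 1
          simp only [Matrix.mul_assoc]
  have key2 : K = A - A * (Z * K) := by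
    rw [Matrix.mul_assoc] at key
    exact eq_sub_of_add_eq key.symm
  constructor
  · -- existence
    have hrw : y - d - Z *ᵥ (θ₀ + K *ᵥ r) = r - (Z * K) *ᵥ r := by
      rw [mulVec_add, mulVec_mulVec, ← hrdef]
      abel
    rw [hrw, mulVec_sub, mulVec_mulVec, ← Matrix.mul_assoc, ← sub_mulVec, Matrix.mul_assoc,
      ← key2]
  · -- uniqueness
    intro θ hθ
    have hQ : (P⁻¹ + Zᵀ * S⁻¹ * Z).PosDef := by
      refine hP.inv.add_posSemidef ?_
      simpa [conjTranspose_eq_transpose_of_trivial] using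
        hS.inv.posSemidef.conjTranspose_mul_mul_same Z
    have hBeq : 1 + A * Z = P * (P⁻¹ + Zᵀ * S⁻¹ * Z) := by
      rw [Matrix.mul_add, hPi, ← hAdef]
      congr 1
      simp only [Matrix.mul_assoc]
    have hB : IsUnit (1 + A * Z) := by
      rw [hBeq]; exact hP.isUnit.mul hQ.isUnit
    have hBK : (1 + A * Z) * K = A := by
      rw [Matrix.add_mul, Matrix.one_mul, ← key]
    have hsplit : y - d - Z *ᵥ θ = r - Z *ᵥ (θ - θ₀) := by
      rw [mulVec_sub, ← hrdef]; abel
    have hθ' : θ - θ₀ = A *ᵥ r - (A * Z) *ᵥ (θ - θ₀) := by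
      calc θ - θ₀ = A *ᵥ (y - d - Z *ᵥ θ) := by
            conv_lhs => rw [hθ]
            abel
        _ = A *ᵥ r - (A * Z) *ᵥ (θ - θ₀) := by
            rw [hsplit, mulVec_sub, mulVec_mulVec]
    have h1 : (1 + A * Z) *ᵥ (θ - θ₀) = A *ᵥ r := by
      rw [add_mulVec, one_mulVec]
      nth_rewrite 1 [hθ']
      abel
    have h2 : (1 + A * Z) *ᵥ (K *ᵥ r) = A *ᵥ r := by
      rw [mulVec_mulVec, hBK]
    have h3 : θ - θ₀ = K *ᵥ r := mulVec_injective_iff_isUnit.mpr hB (h1.trans h2.symm)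
    rw [sub_eq_iff_eq_add] at h3
    rw [h3]; abel
end

section
/- (Scalar Student's t ESD filter: one-step Lipschitz bound and exponential stability.) Let ν, ς, η > 0 and φ, ω ∈ ℝ. For y ∈ ℝ define g_y : ℝ → ℝ by g_y(x) := (1 − φ)ω + φ·( x + η·(y − x)·(1 + (y − x)²/(νς²))⁻¹ ). Then for all x, x̃ ∈ ℝ and all y ∈ ℝ, |g_y(x) − g_y(x̃)| ≤ |φ|·max{1 + η/8, η − 1}·|x − x̃|. Consequently, for any data sequence (y_t)_{t≥1}, any two filtered paths θ_{t} = g_{y_t}(θ_{t−1}) and θ̃_{t} = g_{y_t}(θ̃_{t−1}) satisfy |θ_t − θ̃_t| ≤ ( |φ|·max{1 + η/8, η − 1} )^t · |θ₀ − θ̃₀| for all t ≥ 0; in particular, if |φ|·max{1 + η/8, η − 1} < 1, the two paths converge to each other exponentially fast regardless of the starting points and data. -/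
/-!
The update `x ↦ x + η ψ(y − x)` uses the Student's t score `ψ(u) = u / (1 + u²/c)`, whose
derivative `(1 − w)/(1 + w)²` (with `w = u²/c ≥ 0`) lies in `[−1/8, 1]`, the minimum being
attained at `w = 3`. Hence the update has derivative in `[1 − η, 1 + η/8]`, and by the mean value
theorem it is Lipschitz with constant `max (1 + η/8) (η − 1)`; the prediction step multiplies
this by `|φ|`. Two filtered paths driven by the same data are then contracted by this factor at
every step.
-/

open Filter Set

noncomputable def esdUpdate (η c y x : ℝ) : ℝ :=
  x + η * (y - x) * (1 + (y - x) ^ 2 / c)⁻¹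

theorem hasDerivAt_studentScore {c : ℝ} (hc : 0 < c) (u : ℝ) :
    HasDerivAt (fun u => u * (1 + u ^ 2 / c)⁻¹)
      ((1 - u ^ 2 / c) / (1 + u ^ 2 / c) ^ 2) u := by
  have hD : 1 + u ^ 2 / c ≠ 0 := by positivity
  have hden : HasDerivAt (fun u : ℝ => 1 + u ^ 2 / c) (2 * u / c) u := by
    simpa using (((hasDerivAt_id u).pow 2).div_const c).const_add 1
  refine ((hasDerivAt_id' u).mul (hden.inv hD)).congr_deriv ?_
  simp only [Pi.inv_apply]
  field_simp
  ring

theorem hasDerivAt_esdUpdate {c : ℝ} (hc : 0 < c) (η y x : ℝ) :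
    HasDerivAt (esdUpdate η c y)
      (1 - η * ((1 - (y - x) ^ 2 / c) / (1 + (y - x) ^ 2 / c) ^ 2)) x := by
  have hscore := (hasDerivAt_studentScore hc (y - x)).comp x ((hasDerivAt_id' x).const_sub y)
  refine (((hasDerivAt_id' x).add (hscore.const_mul η)).congr_deriv (by ring)).congr_of_eventuallyEq
    (Eventually.of_forall fun z => ?_)
  simp only [esdUpdate, Pi.add_apply, Function.comp_apply]
  ring

theorem one_sub_div_one_add_sq_mem_Icc {w : ℝ} (hw : 0 ≤ w) :
    (1 - w) / (1 + w) ^ 2 ∈ Icc (-(1 / 8)) 1 := by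
  have hpos : 0 < (1 + w) ^ 2 := by positivity
  constructor
  · rw [le_div_iff₀ hpos]
    nlinarith [sq_nonneg (w - 3)]
  · rw [div_le_one hpos]
    nlinarith

theorem abs_one_sub_mul_le_max {η r : ℝ} (hη : 0 ≤ η) (hr : r ∈ Icc (-(1 / 8)) 1) :
    |1 - η * r| ≤ max (1 + η / 8) (η - 1) := by
  obtain ⟨hr₀, hr₁⟩ := hr
  rw [abs_le]
  constructor
  · nlinarith [le_max_right (1 + η / 8) (η - 1)]
  · nlinarith [le_max_left (1 + η / 8) (η - 1)]

theorem abs_esdUpdate_sub_le {c η : ℝ} (hc : 0 < c) (hη : 0 ≤ η) (y x x' : ℝ) :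
    |esdUpdate η c y x - esdUpdate η c y x'| ≤ max (1 + η / 8) (η - 1) * |x - x'| :=
  convex_univ.norm_image_sub_le_of_norm_hasDerivWithin_le
    (fun z _ => (hasDerivAt_esdUpdate hc η y z).hasDerivWithinAt)
    (fun z _ => abs_one_sub_mul_le_max hη
      (one_sub_div_one_add_sq_mem_Icc (by positivity)))
    (mem_univ x') (mem_univ x)

theorem dist_le_pow_mul_of_lipschitz_step {α : Type*} [PseudoMetricSpace α] {g : ℕ → α → α}
    {L : ℝ} (hL : 0 ≤ L) (hg : ∀ t x x', dist (g t x) (g t x') ≤ L * dist x x')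
    {θ θ' : ℕ → α} (hθ : ∀ t, θ (t + 1) = g t (θ t)) (hθ' : ∀ t, θ' (t + 1) = g t (θ' t))
    (t : ℕ) : dist (θ t) (θ' t) ≤ L ^ t * dist (θ 0) (θ' 0) := by
  induction t with
  | zero => simp
  | succ n ih =>
    calc dist (θ (n + 1)) (θ' (n + 1)) ≤ L * dist (θ n) (θ' n) := by
          rw [hθ, hθ']
          exact hg n _ _
      _ ≤ L * (L ^ n * dist (θ 0) (θ' 0)) := mul_le_mul_of_nonneg_left ih hL
      _ = L ^ (n + 1) * dist (θ 0) (θ' 0) := by ring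

/-- Scalar Student's t ESD filter: one-step Lipschitz bound and exponential stability.
For `ν, ς, η > 0` and `φ, ω ∈ ℝ`, the prediction-to-prediction map
`g_y(x) = (1 − φ)ω + φ(x + η(y − x)(1 + (y − x)²/(νς²))⁻¹)` satisfies
`|g_y(x) − g_y(x̃)| ≤ |φ| max{1 + η/8, η − 1} |x − x̃|` for all `x, x̃, y`; consequently any
two filtered paths satisfy `|θ_t − θ̃_t| ≤ (|φ| max{1 + η/8, η − 1})^t |θ₀ − θ̃₀|`, and if
`|φ| max{1 + η/8, η − 1} < 1` they converge to each other exponentially fast. -/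
theorem student_t_esd_stability (ν ς η : ℝ) (hν : 0 < ν) (hς : 0 < ς) (hη : 0 < η)
    (φ ω : ℝ) :
    (∀ y x x' : ℝ,
        |((1 - φ) * ω + φ * (x + η * (y - x) * (1 + (y - x) ^ 2 / (ν * ς ^ 2))⁻¹))
            - ((1 - φ) * ω + φ * (x' + η * (y - x') * (1 + (y - x') ^ 2 / (ν * ς ^ 2))⁻¹))|
          ≤ |φ| * max (1 + η / 8) (η - 1) * |x - x'|) ∧
      ∀ (ydata θ θ' : ℕ → ℝ),
        (∀ t : ℕ, θ (t + 1) = (1 - φ) * ω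
            + φ * (θ t + η * (ydata (t + 1) - θ t)
                * (1 + (ydata (t + 1) - θ t) ^ 2 / (ν * ς ^ 2))⁻¹)) →
        (∀ t : ℕ, θ' (t + 1) = (1 - φ) * ω
            + φ * (θ' t + η * (ydata (t + 1) - θ' t)
                * (1 + (ydata (t + 1) - θ' t) ^ 2 / (ν * ς ^ 2))⁻¹)) →
        (∀ t : ℕ, |θ t - θ' t| ≤ (|φ| * max (1 + η / 8) (η - 1)) ^ t * |θ 0 - θ' 0|) ∧
          (|φ| * max (1 + η / 8) (η - 1) < 1 →
            Tendsto (fun t => |θ t - θ' t|) atTop (nhds 0)) := by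
  set L := |φ| * max (1 + η / 8) (η - 1)
  have hL : 0 ≤ L := mul_nonneg (abs_nonneg φ) ((by positivity : (0 : ℝ) ≤ 1 + η / 8).trans
    (le_max_left _ _))
  have lip : ∀ y x x' : ℝ, |((1 - φ) * ω + φ * esdUpdate η (ν * ς ^ 2) y x)
      - ((1 - φ) * ω + φ * esdUpdate η (ν * ς ^ 2) y x')| ≤ L * |x - x'| := by
    intro y x x'
    rw [add_sub_add_left_eq_sub, ← mul_sub, abs_mul, mul_assoc]
    exact mul_le_mul_of_nonneg_left (abs_esdUpdate_sub_le (by positivity) hη.le y x x')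
      (abs_nonneg φ)
  refine ⟨lip, fun ydata θ θ' hθ hθ' => ?_⟩
  have hbound (t : ℕ) : |θ t - θ' t| ≤ L ^ t * |θ 0 - θ' 0| := by
    simpa only [Real.dist_eq] using dist_le_pow_mul_of_lipschitz_step hL
      (g := fun t x => (1 - φ) * ω + φ * esdUpdate η (ν * ς ^ 2) (ydata (t + 1)) x)
      (by simpa only [Real.dist_eq] using fun t => lip (ydata (t + 1))) hθ hθ' t
  refine ⟨hbound, fun hL₁ => ?_⟩
  refine squeeze_zero (fun t => abs_nonneg _) hbound ?_
  simpa using (tendsto_pow_atTop_nhds_zero_of_lt_one hL hL₁).mul_const |θ 0 - θ' 0|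
end
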